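/- Let u, B : ℝ × ℝ³ → ℝ³ and ρ, P : ℝ × ℝ³ → ℝ be smooth with ρ > 0 everywhere, satisfying ρ(∂ₜu + (u·∇)u) = (curl B) × B − ∇P, ∂ₜρ + u·∇ρ + ρ div u = 0, ∂ₜB = curl(u × B), and div B = 0. Then the magnetic potential vorticity q_c = B·∇ρ satisfies the pointwise equation ∂ₜq_c + div(q_c u) + div( ρ (div u) B ) = 0. -/

import Mathlib

open MeasureTheory

noncomputable section

/-- Physical space `ℝ³`. -/
abbrev Space : Type := Fin 3 → ℝ

/-- Time-space points `ℝ × ℝ³`. -/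
abbrev Pt : Type := ℝ × Space

/-- Time partial derivative `∂ₜ f`. -/
def tder (f : Pt → ℝ) (x : Pt) : ℝ := fderiv ℝ f x (1, 0)

/-- Spatial partial derivative `∂ᵢ f` in the `i`-th coordinate direction. -/
def pder (i : Fin 3) (f : Pt → ℝ) (x : Pt) : ℝ := fderiv ℝ f x (0, Pi.single i 1)

/-- Spatial gradient `∇f`. -/
def sgrad (f : Pt → ℝ) (x : Pt) : Space := fun i => pder i f x

/-- Spatial divergence `div v`. -/
def sdiv (v : Pt → Space) (x : Pt) : ℝ := ∑ i, pder i (fun y => v y i) x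

/-- Spatial curl `curl v`. -/
def scurl (v : Pt → Space) (x : Pt) : Space :=
  ![pder 1 (fun y => v y 2) x - pder 2 (fun y => v y 1) x,
    pder 2 (fun y => v y 0) x - pder 0 (fun y => v y 2) x,
    pder 0 (fun y => v y 1) x - pder 1 (fun y => v y 0) x]

/-- Euclidean dot product on `ℝ³`. -/
def dot3 (a b : Space) : ℝ := ∑ i, a i * b i

/-- Cross product on `ℝ³`. -/
def cross3 (a b : Space) : Space :=
  ![a 1 * b 2 - a 2 * b 1, a 2 * b 0 - a 0 * b 2, a 0 * b 1 - a 1 * b 0]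

/-- Componentwise time derivative of a vector field. -/
def tderV (v : Pt → Space) (x : Pt) : Space := fun i => tder (fun y => v y i) x

/-- Advective derivative `(u · ∇) v`. -/
def adv (u v : Pt → Space) (x : Pt) : Space :=
  fun i => dot3 (u x) (sgrad (fun y => v y i) x)

/-- `L`-periodicity in each spatial variable (scalar fields). -/
def SPeriodic (L : ℝ) (f : Pt → ℝ) : Prop :=
  ∀ (x : Pt) (i : Fin 3), f (x.1, x.2 + L • (Pi.single i 1 : Space)) = f x

/-- `L`-periodicity in each spatial variable (vector fields). -/
def SPeriodicV (L : ℝ) (v : Pt → Space) : Prop :=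
  ∀ (x : Pt) (i : Fin 3), v (x.1, x.2 + L • (Pi.single i 1 : Space)) = v x

/-- The periodic cell `[0,L]³`. -/
def box (L : ℝ) : Set Space := Set.Icc 0 (fun _ => L)

/-- Directional derivative. -/
def pd (w : Pt) (f : Pt → ℝ) (x : Pt) : ℝ := fderiv ℝ f x w

/-- Spatial unit directions. -/
def es (i : Fin 3) : Pt := (0, Pi.single i 1)

/-- Time direction. -/
def et : Pt := ((1 : ℝ), (0 : Space))

lemma tder_eq (f : Pt → ℝ) : tder f = pd et f := rfl
lemma pder_eq (i : Fin 3) (f : Pt → ℝ) : pder i f = pd (es i) f := rfl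

/-- Smooth (`C^∞` in the `ℕ∞` sense). -/
abbrev Sm (f : Pt → ℝ) : Prop := ContDiff ℝ (⊤ : ℕ∞) f

lemma Sm.diff {f : Pt → ℝ} (hf : Sm f) : Differentiable ℝ f :=
  hf.differentiable (by simp)

lemma Sm.pd {f : Pt → ℝ} (hf : Sm f) (w : Pt) : Sm (pd w f) := by
  have h := hf.fderiv_right (m := (⊤:ℕ∞)) (by exact_mod_cast le_top)
  exact (ContinuousLinearMap.apply ℝ ℝ w).contDiff.comp h

lemma pd_mul {f g : Pt → ℝ} (hf : Sm f) (hg : Sm g) (w : Pt) (x : Pt) :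
    pd w (fun y => f y * g y) x = pd w f x * g x + f x * pd w g x := by
  unfold pd
  rw [fderiv_fun_mul hf.diff.differentiableAt hg.diff.differentiableAt]
  simp; ring

lemma pd_add {f g : Pt → ℝ} (hf : Sm f) (hg : Sm g) (w : Pt) (x : Pt) :
    pd w (fun y => f y + g y) x = pd w f x + pd w g x := by
  unfold pd
  rw [fderiv_fun_add hf.diff.differentiableAt hg.diff.differentiableAt]; simp

lemma pd_neg (f : Pt → ℝ) (w : Pt) (x : Pt) :
    pd w (fun y => -f y) x = -pd w f x := by
  unfold pd; rw [fderiv_fun_neg]; simp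

lemma pd_sub {f g : Pt → ℝ} (hf : Sm f) (hg : Sm g) (w : Pt) (x : Pt) :
    pd w (fun y => f y - g y) x = pd w f x - pd w g x := by
  unfold pd
  rw [fderiv_fun_sub hf.diff.differentiableAt hg.diff.differentiableAt]; simp

lemma pd_mulsub {f g h k : Pt → ℝ} (hf : Sm f) (hg : Sm g) (hh : Sm h) (hk : Sm k)
    (w : Pt) (x : Pt) :
    pd w (fun y => f y * g y - h y * k y) x
      = (pd w f x * g x + f x * pd w g x) - (pd w h x * k x + h x * pd w k x) := by
  rw [pd_sub (hf.mul hg) (hh.mul hk), pd_mul hf hg, pd_mul hh hk]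

lemma pd_add3 {f g h : Pt → ℝ} (hf : Sm f) (hg : Sm g) (hh : Sm h) (w : Pt) (x : Pt) :
    pd w (fun y => f y + g y + h y) x = pd w f x + pd w g x + pd w h x := by
  rw [pd_add (hf.add hg) hh, pd_add hf hg]

lemma pd_expand3 (w x : Pt) (f g : Fin 3 → (Pt → ℝ))
    (hf : ∀ i, Sm (f i)) (hg : ∀ i, Sm (g i)) :
    pd w (fun y => f 0 y * g 0 y + f 1 y * g 1 y + f 2 y * g 2 y) x
      = pd w (f 0) x * g 0 x + f 0 x * pd w (g 0) x
        + (pd w (f 1) x * g 1 x + f 1 x * pd w (g 1) x)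
        + (pd w (f 2) x * g 2 x + f 2 x * pd w (g 2) x) := by
  rw [pd_add3 ((hf 0).mul (hg 0)) ((hf 1).mul (hg 1)) ((hf 2).mul (hg 2)),
    pd_mul (hf 0) (hg 0), pd_mul (hf 1) (hg 1), pd_mul (hf 2) (hg 2)]

lemma pd_comm {f : Pt → ℝ} (hf : Sm f) (w w' : Pt) (x : Pt) :
    pd w (pd w' f) x = pd w' (pd w f) x := by
  have hs : IsSymmSndFDerivAt ℝ f x :=
    (hf.contDiffAt).isSymmSndFDerivAt (by rw [minSmoothness_of_isRCLikeNormedField]; exact WithTop.coe_le_coe.2 (le_top : (2:ℕ∞) ≤ ⊤))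
  have hd : DifferentiableAt ℝ (fderiv ℝ f) x := by
    have h := hf.fderiv_right (m := (⊤:ℕ∞)) (by exact_mod_cast le_top)
    exact h.differentiable (by simp) x
  calc pd w (pd w' f) x = fderiv ℝ (fun y => (fderiv ℝ f y) w') x w := rfl
    _ = fderiv ℝ (fderiv ℝ f) x w w' := by
          rw [fderiv_clm_apply hd (differentiableAt_const w')]; simp
    _ = fderiv ℝ (fderiv ℝ f) x w' w := hs w w'
    _ = pd w' (pd w f) x := by
          show _ = fderiv ℝ (fun y => (fderiv ℝ f y) w) x w'
          rw [fderiv_clm_apply hd (differentiableAt_const w)]; simp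

lemma pd_mass (w x : Pt) (u0 u1 u2 r0 r1 r2 rf d0 d1 d2 : Pt → ℝ)
    (hu0 : Sm u0) (hu1 : Sm u1) (hu2 : Sm u2) (hr0 : Sm r0) (hr1 : Sm r1) (hr2 : Sm r2)
    (hrf : Sm rf) (hd0 : Sm d0) (hd1 : Sm d1) (hd2 : Sm d2) :
    pd w (fun y => -(u0 y * r0 y + u1 y * r1 y + u2 y * r2 y
        + rf y * (d0 y + d1 y + d2 y))) x
      = -((pd w u0 x * r0 x + u0 x * pd w r0 x)
        + (pd w u1 x * r1 x + u1 x * pd w r1 x)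
        + (pd w u2 x * r2 x + u2 x * pd w r2 x)
        + (pd w rf x * (d0 x + d1 x + d2 x)
            + rf x * (pd w d0 x + pd w d1 x + pd w d2 x))) := by
  rw [pd_neg, pd_add (((hu0.mul hr0).add (hu1.mul hr1)).add (hu2.mul hr2))
      (hrf.mul ((hd0.add hd1).add hd2)),
    pd_add3 (hu0.mul hr0) (hu1.mul hr1) (hu2.mul hr2),
    pd_mul hu0 hr0, pd_mul hu1 hr1, pd_mul hu2 hr2,
    pd_mul hrf ((hd0.add hd1).add hd2), pd_add3 hd0 hd1 hd2]

/-- for ideal compressible MHD the magnetic potential vorticity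
`q_c = B·∇ρ` satisfies `∂ₜq_c + div(q_c u) + div(ρ (div u) B) = 0`. -/
theorem magnetic_potential_vorticity_equation_mhd
    (u B : Pt → Space) (ρ P : Pt → ℝ)
    (hu : ContDiff ℝ (⊤ : ℕ∞) u) (hB : ContDiff ℝ (⊤ : ℕ∞) B) (hρ : ContDiff ℝ (⊤ : ℕ∞) ρ)
    (hP : ContDiff ℝ (⊤ : ℕ∞) P)
    (hρpos : ∀ x : Pt, 0 < ρ x)
    (hmom : ∀ x : Pt, ρ x • (tderV u x + adv u u x)
      = cross3 (scurl B x) (B x) - sgrad P x)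
    (hmass : ∀ x : Pt, tder ρ x + dot3 (u x) (sgrad ρ x) + ρ x * sdiv u x = 0)
    (hind : ∀ x : Pt, tderV B x = scurl (fun y => cross3 (u y) (B y)) x)
    (hdivB : ∀ x : Pt, sdiv B x = 0)
    (x : Pt) :
    tder (fun y => dot3 (B y) (sgrad ρ y)) x
      + sdiv (fun y => dot3 (B y) (sgrad ρ y) • u y) x
      + sdiv (fun y => (ρ y * sdiv u y) • B y) x = 0 := by
  have sU : ∀ i, Sm (fun y => u y i) := fun i => (contDiff_pi.1 (hu.of_le (by simp))) i
  have sBc : ∀ i, Sm (fun y => B y i) := fun i => (contDiff_pi.1 (hB.of_le (by simp))) i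
  have sR : Sm ρ := hρ.of_le (by simp)
  have sDR : ∀ j, Sm (pd (es j) ρ) := fun j => sR.pd _
  have sDU : ∀ i j, Sm (pd (es i) (fun y => u y j)) := fun i j => (sU j).pd _
  have sQ : Sm (fun y => B y 0 * pd (es 0) ρ y + B y 1 * pd (es 1) ρ y
      + B y 2 * pd (es 2) ρ y) :=
    (((sBc 0).mul (sDR 0)).add ((sBc 1).mul (sDR 1))).add ((sBc 2).mul (sDR 2))
  have sDIV : Sm (fun y => pd (es 0) (fun z => u z 0) y + pd (es 1) (fun z => u z 1) y
      + pd (es 2) (fun z => u z 2) y) :=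
    ((sDU 0 0).add (sDU 1 1)).add (sDU 2 2)
  -- induction equation, componentwise, fully expanded
  have hBt : ∀ j : Fin 3, pd et (fun y => B y j) x
      = scurl (fun y => cross3 (u y) (B y)) x j := fun j => congrFun (hind x) j
  have c0 : (fun y => cross3 (u y) (B y) 0) = fun y => u y 1 * B y 2 - u y 2 * B y 1 :=
    funext fun y => by simp [cross3]
  have c1 : (fun y => cross3 (u y) (B y) 1) = fun y => u y 2 * B y 0 - u y 0 * B y 2 :=
    funext fun y => by simp [cross3]
  have c2 : (fun y => cross3 (u y) (B y) 2) = fun y => u y 0 * B y 1 - u y 1 * B y 0 :=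
    funext fun y => by simp [cross3]
  have Bt0 := hBt 0
  have Bt1 := hBt 1
  have Bt2 := hBt 2
  rw [show scurl (fun y => cross3 (u y) (B y)) x 0
      = pd (es 1) (fun y => cross3 (u y) (B y) 2) x
        - pd (es 2) (fun y => cross3 (u y) (B y) 1) x by simp [scurl, pder_eq],
    c2, c1, pd_mulsub (sU 0) (sBc 1) (sU 1) (sBc 0) (es 1) x,
    pd_mulsub (sU 2) (sBc 0) (sU 0) (sBc 2) (es 2) x] at Bt0
  rw [show scurl (fun y => cross3 (u y) (B y)) x 1
      = pd (es 2) (fun y => cross3 (u y) (B y) 0) x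
        - pd (es 0) (fun y => cross3 (u y) (B y) 2) x by simp [scurl, pder_eq],
    c0, c2, pd_mulsub (sU 1) (sBc 2) (sU 2) (sBc 1) (es 2) x,
    pd_mulsub (sU 0) (sBc 1) (sU 1) (sBc 0) (es 0) x] at Bt1
  rw [show scurl (fun y => cross3 (u y) (B y)) x 2
      = pd (es 0) (fun y => cross3 (u y) (B y) 1) x
        - pd (es 1) (fun y => cross3 (u y) (B y) 0) x by simp [scurl, pder_eq],
    c1, c0, pd_mulsub (sU 2) (sBc 0) (sU 0) (sBc 2) (es 0) x,
    pd_mulsub (sU 1) (sBc 2) (sU 2) (sBc 1) (es 1) x] at Bt2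
  -- mass equation as a functional identity for ∂ₜρ
  have hmf : pd et ρ = fun y => -(u y 0 * pd (es 0) ρ y + u y 1 * pd (es 1) ρ y
      + u y 2 * pd (es 2) ρ y + ρ y * (pd (es 0) (fun z => u z 0) y
      + pd (es 1) (fun z => u z 1) y + pd (es 2) (fun z => u z 2) y)) := by
    funext y
    have h := hmass y
    simp only [tder_eq, pder_eq, dot3, sgrad, sdiv, Fin.sum_univ_three] at h
    linarith
  -- mixed time-space second derivatives of ρ
  have hRt : ∀ j : Fin 3, pd et (pd (es j) ρ) x
      = -((pd (es j) (fun y => u y 0) x * pd (es 0) ρ x + u x 0 * pd (es j) (pd (es 0) ρ) x)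
        + (pd (es j) (fun y => u y 1) x * pd (es 1) ρ x + u x 1 * pd (es j) (pd (es 1) ρ) x)
        + (pd (es j) (fun y => u y 2) x * pd (es 2) ρ x + u x 2 * pd (es j) (pd (es 2) ρ) x)
        + (pd (es j) ρ x * (pd (es 0) (fun z => u z 0) x + pd (es 1) (fun z => u z 1) x
              + pd (es 2) (fun z => u z 2) x)
          + ρ x * (pd (es j) (pd (es 0) (fun z => u z 0)) x
              + pd (es j) (pd (es 1) (fun z => u z 1)) x
              + pd (es j) (pd (es 2) (fun z => u z 2)) x))) := by
    intro j
    rw [pd_comm sR et (es j) x, hmf]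
    exact pd_mass (es j) x _ _ _ _ _ _ _ _ _ _
      (sU 0) (sU 1) (sU 2) (sDR 0) (sDR 1) (sDR 2) sR (sDU 0 0) (sDU 1 1) (sDU 2 2)
  -- div B = 0 at x
  have hdb : pd (es 0) (fun y => B y 0) x + pd (es 1) (fun y => B y 1) x
      + pd (es 2) (fun y => B y 2) x = 0 := by
    have h := hdivB x
    simpa [sdiv, pder_eq, Fin.sum_univ_three] using h
  -- expand the goal
  simp only [tder_eq, pder_eq, sdiv, dot3, sgrad, Pi.smul_apply, smul_eq_mul,
    Fin.sum_univ_three]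
  simp only [pd_expand3 et x (fun j y => B y j) (fun j => pd (es j) ρ) sBc sDR,
    pd_mul sQ (sU 0) (es 0) x, pd_mul sQ (sU 1) (es 1) x, pd_mul sQ (sU 2) (es 2) x,
    pd_expand3 (es 0) x (fun j y => B y j) (fun j => pd (es j) ρ) sBc sDR,
    pd_expand3 (es 1) x (fun j y => B y j) (fun j => pd (es j) ρ) sBc sDR,
    pd_expand3 (es 2) x (fun j y => B y j) (fun j => pd (es j) ρ) sBc sDR,
    pd_mul (sR.mul sDIV) (sBc 0) (es 0) x, pd_mul (sR.mul sDIV) (sBc 1) (es 1) x,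
    pd_mul (sR.mul sDIV) (sBc 2) (es 2) x,
    pd_mul sR sDIV (es 0) x, pd_mul sR sDIV (es 1) x, pd_mul sR sDIV (es 2) x,
    pd_add3 (sDU 0 0) (sDU 1 1) (sDU 2 2) (es 0) x,
    pd_add3 (sDU 0 0) (sDU 1 1) (sDU 2 2) (es 1) x,
    pd_add3 (sDU 0 0) (sDU 1 1) (sDU 2 2) (es 2) x,
    Bt0, Bt1, Bt2, hRt 0, hRt 1, hRt 2,
    pd_comm sR (es 1) (es 0) x, pd_comm sR (es 2) (es 0) x, pd_comm sR (es 2) (es 1) x]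
  linear_combination (u x 0 * pd (es 0) ρ x + u x 1 * pd (es 1) ρ x
    + u x 2 * pd (es 2) ρ x + ρ x * (pd (es 0) (fun z => u z 0) x
    + pd (es 1) (fun z => u z 1) x + pd (es 2) (fun z => u z 2) x)) * hdb
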